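/- Let k : [0, r₀] → ℝ be C¹, nonnegative, and satisfy k'(r) ≤ (k(r)² + 1)(M + 1) where M ≥ 0 is a constant bounding the relevant curvature. Then for r, ε with (1+ε)r ≤ r₀, (k(r(1+ε)) − k(r(1−ε)))/(1 + k(r(1+ε))·k(r(1−ε))) ≤ tan(2εr(M+1)), provided 2εr(M+1) < π/2. -/

import Mathlib

/-!
Along `[r(1-ε), r(1+ε)]` the Riccati inequality `k' ≤ (k² + 1)(M + 1)` says exactly that
`(arctan ∘ k)' ≤ M + 1`, so `arctan k` grows by at most `2εr(M + 1)` over the interval. Since `k ≥ 0`,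
the difference of the two arctangents is the arctangent of the quotient on the left, and applying
the increasing function `tan` on `(-π/2, π/2)` gives the bound.
-/

open Real Set

namespace Real

lemma arctan_sub_arctan {x y : ℝ} (h : -1 < x * y) :
    arctan x - arctan y = arctan ((x - y) / (1 + x * y)) := by
  have := arctan_add (x := x) (y := -y) (by linarith)
  rw [arctan_neg, ← sub_eq_add_neg, ← sub_eq_add_neg, mul_neg, sub_neg_eq_add] at this
  exact this

lemma le_tan_of_arctan_le {x θ : ℝ} (h : arctan x ≤ θ) (hθ : θ < π / 2) : x ≤ tan θ := by
  have hθ' : -(π / 2) < θ := (neg_pi_div_two_lt_arctan x).trans_le h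
  calc x = tan (arctan x) := (tan_arctan x).symm
    _ ≤ tan θ := strictMonoOn_tan.monotoneOn (arctan_mem_Ioo x) ⟨hθ', hθ⟩ h

end Real

theorem Convex.arctan_sub_arctan_le_of_deriv_le {D : Set ℝ} (hD : Convex ℝ D) {f : ℝ → ℝ}
    (hf : ContinuousOn f D) (hf' : DifferentiableOn ℝ f (interior D)) {c : ℝ}
    (le_hf' : ∀ x ∈ interior D, deriv f x ≤ (f x ^ 2 + 1) * c) {x y : ℝ} (hx : x ∈ D)
    (hy : y ∈ D) (hxy : x ≤ y) : arctan (f y) - arctan (f x) ≤ c * (y - x) := by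
  refine hD.image_sub_le_mul_sub_of_deriv_le (f := fun z => arctan (f z))
    (continuous_arctan.comp_continuousOn hf)
    hf'.arctan (fun z hz => ?_) x hx y hy hxy
  have hfz : DifferentiableAt ℝ f z := hf'.differentiableAt (isOpen_interior.mem_nhds hz)
  rw [deriv_arctan hfz, one_div_mul_eq_div, div_le_iff₀ (by positivity), mul_comm c, add_comm 1]
  exact le_hf' z hz

theorem stmt2_general (r₀ M : ℝ) (k : ℝ → ℝ)
    (hk : ContDiffOn ℝ 1 k (Set.Icc 0 r₀))
    (hknn : ∀ x ∈ Set.Icc 0 r₀, 0 ≤ k x)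
    (hk' : ∀ x ∈ Set.Icc 0 r₀, deriv k x ≤ ((k x)^2 + 1) * (M + 1)) :
    ∀ r ε : ℝ, 0 < r → 0 < ε → ε < 1 → r*(1+ε) ≤ r₀ →
      2*ε*r*(M+1) < Real.pi/2 →
      (k (r*(1+ε)) - k (r*(1-ε))) / (1 + k (r*(1+ε)) * k (r*(1-ε)))
        ≤ Real.tan (2*ε*r*(M+1)) := by
  intro r ε hr hε hε1 hr₀ hT
  have hsub : Icc (r * (1 - ε)) (r * (1 + ε)) ⊆ Icc 0 r₀ :=
    Icc_subset_Icc (by nlinarith) hr₀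
  have hab : r * (1 - ε) ≤ r * (1 + ε) := by nlinarith
  have hgrowth := (convex_Icc (r * (1 - ε)) (r * (1 + ε))).arctan_sub_arctan_le_of_deriv_le
    (hk.continuousOn.mono hsub)
    ((hk.differentiableOn one_ne_zero).mono (interior_subset.trans hsub))
    (fun x hx => hk' x (hsub (interior_subset hx)))
    (left_mem_Icc.2 hab) (right_mem_Icc.2 hab) hab
  have hprod : 0 ≤ k (r * (1 + ε)) * k (r * (1 - ε)) :=
    mul_nonneg (hknn _ (hsub (right_mem_Icc.2 hab))) (hknn _ (hsub (left_mem_Icc.2 hab)))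
  rw [arctan_sub_arctan (by linarith)] at hgrowth
  exact le_tan_of_arctan_le (hgrowth.trans_eq (by ring)) hT

/-- Radial Harnack estimate for the second fundamental form:
`k' ≤ (k²+1)(M+1)` implies the arctan-difference bound
`(k(r(1+ε)) − k(r(1−ε)))/(1 + k(r(1+ε))k(r(1−ε))) ≤ tan(2εr(M+1))`. -/
theorem stmt2 (r₀ M : ℝ) (hr₀ : 0 < r₀) (hM : 0 ≤ M) (k : ℝ → ℝ)
    (hk : ContDiffOn ℝ 1 k (Set.Icc 0 r₀))
    (hknn : ∀ x ∈ Set.Icc 0 r₀, 0 ≤ k x)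
    (hk' : ∀ x ∈ Set.Icc 0 r₀, deriv k x ≤ ((k x)^2 + 1) * (M + 1)) :
    ∀ r ε : ℝ, 0 < r → 0 < ε → ε < 1 → r*(1+ε) ≤ r₀ →
      2*ε*r*(M+1) < Real.pi/2 →
      (k (r*(1+ε)) - k (r*(1-ε))) / (1 + k (r*(1+ε)) * k (r*(1-ε)))
        ≤ Real.tan (2*ε*r*(M+1)) :=
  stmt2_general r₀ M k hk hknn hk'
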